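/- Let X = {(t,x,z) ∈ ℝ³ : 0 ≤ x ≤ t and z² = t²x²}. The germ of X at the origin is not Lipschitz Normally Embedded: for every neighborhood U of 0 in ℝ³, the set X ∩ U is not Lipschitz Normally Embedded. -/

import Mathlib

open scoped ENNReal

/-- The inner distance on a subset `X` of a (pseudo-e)metric space: the infimum of the
lengths (total variations) of continuous paths `γ : [0,1] → X` joining `x` to `y`. -/
noncomputable def innerDist {E : Type*} [PseudoEMetricSpace E] (X : Set E) (x y : E) : ℝ≥0∞ :=
  ⨅ (γ : ℝ → E) (_ : ContinuousOn γ (Set.Icc 0 1))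
    (_ : Set.MapsTo γ (Set.Icc 0 1) X) (_ : γ 0 = x) (_ : γ 1 = y),
    eVariationOn γ (Set.Icc 0 1)

/-- A subset `X` of a normed space is Lipschitz Normally Embedded (LNE) if there is a
constant `K ≥ 1` such that `d_i(x,y) ≤ K‖x − y‖` for all `x, y ∈ X`. -/
def IsLNE {E : Type*} [NormedAddCommGroup E] (X : Set E) : Prop :=
  ∃ K : ℝ, 1 ≤ K ∧ ∀ x ∈ X, ∀ y ∈ X, innerDist X x y ≤ ENNReal.ofReal (K * ‖x - y‖)

lemma coord_abs_le_dist (x y : EuclideanSpace ℝ (Fin 3)) (i : Fin 3) :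
    |x i - y i| ≤ dist x y := by
  rw [EuclideanSpace.dist_eq, ← Real.dist_eq]
  have h : dist (x i) (y i) ^ 2 ≤ ∑ j, dist (x j) (y j) ^ 2 :=
    Finset.single_le_sum (f := fun j => dist (x j) (y j) ^ 2)
      (fun j _ => sq_nonneg _) (Finset.mem_univ i)
  calc dist (x i) (y i) = Real.sqrt (dist (x i) (y i) ^ 2) := (Real.sqrt_sq dist_nonneg).symm
    _ ≤ _ := Real.sqrt_le_sqrt h

lemma coord_le_edist (x y : EuclideanSpace ℝ (Fin 3)) (i : Fin 3) :
    ENNReal.ofReal |x i - y i| ≤ edist x y := by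
  rw [edist_dist]
  exact ENNReal.ofReal_le_ofReal (coord_abs_le_dist x y i)

theorem stmt18 :
    ∀ U ∈ nhds (0 : EuclideanSpace ℝ (Fin 3)),
      ¬ IsLNE ({p : EuclideanSpace ℝ (Fin 3) |
        0 ≤ p 1 ∧ p 1 ≤ p 0 ∧ (p 2) ^ 2 = (p 0) ^ 2 * (p 1) ^ 2} ∩ U) := by
  intro U hU
  rintro ⟨K, hK1, hK⟩
  obtain ⟨ε, hε, hball⟩ := Metric.mem_nhds_iff.mp hU
  set t : ℝ := min (ε / 4) (1 / (2 * K)) with ht_def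
  have hKpos : (0 : ℝ) < K := lt_of_lt_of_le one_pos hK1
  have ht0 : 0 < t := lt_min (by linarith) (by positivity)
  have htK : t ≤ 1 / (2 * K) := min_le_right _ _
  have htε : t ≤ ε / 4 := min_le_left _ _
  have ht1 : t ≤ 1 := by
    have : 1 / (2 * K) ≤ 1 := by
      rw [div_le_one (by positivity)]; linarith
    linarith
  set p : EuclideanSpace ℝ (Fin 3) := !₂[t, t, t ^ 2] with hp_def
  set q : EuclideanSpace ℝ (Fin 3) := !₂[t, t, -(t ^ 2)] with hq_def
  set X : Set (EuclideanSpace ℝ (Fin 3)) :=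
    {p : EuclideanSpace ℝ (Fin 3) |
      0 ≤ p 1 ∧ p 1 ≤ p 0 ∧ (p 2) ^ 2 = (p 0) ^ 2 * (p 1) ^ 2} with hX_def
  -- norms of p and q
  have hnormp : ‖p‖ < ε := by
    rw [EuclideanSpace.norm_eq]
    have hsum : ∑ i, ‖p i‖ ^ 2 = t ^ 2 + t ^ 2 + t ^ 4 := by
      rw [Fin.sum_univ_three]
      show ‖t‖ ^ 2 + ‖t‖ ^ 2 + ‖t ^ 2‖ ^ 2 = _
      simp only [Real.norm_eq_abs, sq_abs]; ring
    rw [hsum]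
    have ht2 : t ^ 2 ≤ 1 := by nlinarith
    have ht4 : t ^ 4 ≤ t ^ 2 := by nlinarith [sq_nonneg t]
    have h1 : t ^ 2 + t ^ 2 + t ^ 4 ≤ (2 * t) ^ 2 := by nlinarith
    calc Real.sqrt (t ^ 2 + t ^ 2 + t ^ 4) ≤ Real.sqrt ((2 * t) ^ 2) := Real.sqrt_le_sqrt h1
      _ = 2 * t := Real.sqrt_sq (by linarith)
      _ < ε := by linarith
  have hnormq : ‖q‖ < ε := by
    rw [EuclideanSpace.norm_eq]
    have hsum : ∑ i, ‖q i‖ ^ 2 = t ^ 2 + t ^ 2 + t ^ 4 := by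
      rw [Fin.sum_univ_three]
      show ‖t‖ ^ 2 + ‖t‖ ^ 2 + ‖-(t ^ 2)‖ ^ 2 = _
      simp only [Real.norm_eq_abs, sq_abs]; ring
    rw [hsum]
    have ht2 : t ^ 2 ≤ 1 := by nlinarith
    have ht4 : t ^ 4 ≤ t ^ 2 := by nlinarith [sq_nonneg t]
    have h1 : t ^ 2 + t ^ 2 + t ^ 4 ≤ (2 * t) ^ 2 := by nlinarith
    calc Real.sqrt (t ^ 2 + t ^ 2 + t ^ 4) ≤ Real.sqrt ((2 * t) ^ 2) := Real.sqrt_le_sqrt h1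
      _ = 2 * t := Real.sqrt_sq (by linarith)
      _ < ε := by linarith
  have hpU : p ∈ U := hball (by simpa [Metric.mem_ball] using hnormp)
  have hqU : q ∈ U := hball (by simpa [Metric.mem_ball] using hnormq)
  have hpX : p ∈ X := by
    refine ⟨le_of_lt ht0, le_refl t, ?_⟩
    show (t ^ 2) ^ 2 = t ^ 2 * t ^ 2; ring
  have hqX : q ∈ X := by
    refine ⟨le_of_lt ht0, le_refl t, ?_⟩
    show (-(t ^ 2)) ^ 2 = t ^ 2 * t ^ 2; ring
  have hmain := hK p ⟨hpX, hpU⟩ q ⟨hqX, hqU⟩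
  -- compute ‖p - q‖
  have hpq : ‖p - q‖ = 2 * t ^ 2 := by
    rw [EuclideanSpace.norm_eq]
    have hterm : ∀ i, ‖(p - q) i‖ ^ 2 = (p i - q i) ^ 2 := fun i => by
      rw [PiLp.sub_apply, Real.norm_eq_abs, sq_abs]
    simp_rw [hterm]
    rw [Fin.sum_univ_three]
    have e0 : p 0 - q 0 = 0 := by show t - t = 0; ring
    have e1 : p 1 - q 1 = 0 := by show t - t = 0; ring
    have e2 : p 2 - q 2 = 2 * t ^ 2 := by show t ^ 2 - -(t ^ 2) = 2 * t ^ 2; ring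
    rw [e0, e1, e2]
    have : (0:ℝ) ^ 2 + 0 ^ 2 + (2 * t ^ 2) ^ 2 = (2 * t ^ 2) ^ 2 := by ring
    rw [this, Real.sqrt_sq (by positivity)]
  -- lower bound on the inner distance
  have hlow : ENNReal.ofReal (2 * t) ≤ innerDist (X ∩ U) p q := by
    refine le_iInf fun γ => le_iInf fun hcont => le_iInf fun hmaps =>
      le_iInf fun h0 => le_iInf fun h1 => ?_
    have hzc : ContinuousOn (fun s => γ s 2) (Set.Icc 0 1) :=
      (EuclideanSpace.proj (2 : Fin 3)).continuous.comp_continuousOn hcont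
    have hivt : (0 : ℝ) ∈ (fun s => γ s 2) '' Set.Icc 0 1 := by
      apply intermediate_value_Icc' (by norm_num : (0:ℝ) ≤ 1) hzc
      constructor
      · rw [h1]; show -(t ^ 2) ≤ 0; nlinarith
      · rw [h0]; show 0 ≤ t ^ 2; positivity
    obtain ⟨s, hs, hγs⟩ := hivt
    have hsX : γ s ∈ X := (hmaps hs).1
    have hx0 : γ s 1 = 0 := by
      obtain ⟨ha, hb, hc⟩ := hsX
      have hprod : γ s 0 ^ 2 * γ s 1 ^ 2 = 0 := by
        rw [← hc]; simp only at hγs; rw [hγs]; ring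
      rcases mul_eq_zero.mp hprod with h | h
      · have h0' : γ s 0 = 0 := pow_eq_zero_iff (two_ne_zero) |>.mp h
        linarith
      · exact pow_eq_zero_iff (two_ne_zero) |>.mp h
    -- split the variation at s
    have key := eVariationOn.Icc_add_Icc γ (s := Set.Icc (0:ℝ) 1) hs.1 hs.2 hs
    rw [Set.inter_self] at key
    have hmem0 : (0:ℝ) ∈ Set.Icc (0:ℝ) 1 ∩ Set.Icc 0 s :=
      ⟨⟨le_rfl, by norm_num⟩, ⟨le_rfl, hs.1⟩⟩
    have hmems1 : s ∈ Set.Icc (0:ℝ) 1 ∩ Set.Icc 0 s := ⟨hs, ⟨hs.1, le_rfl⟩⟩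
    have hmems2 : s ∈ Set.Icc (0:ℝ) 1 ∩ Set.Icc s 1 := ⟨hs, ⟨le_rfl, hs.2⟩⟩
    have hmem1 : (1:ℝ) ∈ Set.Icc (0:ℝ) 1 ∩ Set.Icc s 1 :=
      ⟨⟨by norm_num, le_rfl⟩, ⟨hs.2, le_rfl⟩⟩
    have d1 : edist (γ 0) (γ s) ≤ eVariationOn γ (Set.Icc (0:ℝ) 1 ∩ Set.Icc 0 s) :=
      eVariationOn.edist_le γ hmem0 hmems1
    have d2 : edist (γ s) (γ 1) ≤ eVariationOn γ (Set.Icc (0:ℝ) 1 ∩ Set.Icc s 1) :=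
      eVariationOn.edist_le γ hmems2 hmem1
    have hd1 : ENNReal.ofReal t ≤ edist (γ 0) (γ s) := by
      have h := coord_le_edist (γ 0) (γ s) 1
      have hc1 : γ 0 1 = t := by rw [h0]; rfl
      rw [hc1, hx0] at h
      simpa [abs_of_nonneg ht0.le] using h
    have hd2 : ENNReal.ofReal t ≤ edist (γ s) (γ 1) := by
      have h := coord_le_edist (γ s) (γ 1) 1
      have hc1 : γ 1 1 = t := by rw [h1]; rfl
      rw [hc1, hx0] at h
      simpa [abs_of_nonneg ht0.le] using h
    calc ENNReal.ofReal (2 * t) = ENNReal.ofReal t + ENNReal.ofReal t := by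
          rw [← ENNReal.ofReal_add ht0.le ht0.le]; ring_nf
      _ ≤ edist (γ 0) (γ s) + edist (γ s) (γ 1) := add_le_add hd1 hd2
      _ ≤ eVariationOn γ (Set.Icc (0:ℝ) 1 ∩ Set.Icc 0 s)
            + eVariationOn γ (Set.Icc (0:ℝ) 1 ∩ Set.Icc s 1) := add_le_add d1 d2
      _ = eVariationOn γ (Set.Icc (0:ℝ) 1) := key
  -- combine
  have hle : ENNReal.ofReal (2 * t) ≤ ENNReal.ofReal (K * ‖p - q‖) := le_trans hlow hmain
  rw [hpq] at hle
  rw [ENNReal.ofReal_le_ofReal_iff (by positivity)] at hle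
  have h1 : t ≥ 1 / K := by
    rw [ge_iff_le, div_le_iff₀ hKpos]
    nlinarith
  have h2 : 1 / (2 * K) < 1 / K := by
    rw [div_lt_div_iff₀ (by positivity) hKpos]
    nlinarith
  linarith
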